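/- Let λ > 0 and let f, g : ℝ² → ℝ be continuous functions with compact support. If M_λ(R_θ f(t)) = M_λ(R_θ g(t)) for every angle θ ∈ [0,2π) and every t ∈ ℝ, then f = g. In other words, the Modulo Radon Transform is injective on the space of continuous compactly supported functions on ℝ² for every threshold λ > 0. -/

import Mathlib

open MeasureTheory Real

/-- The centered `2λ`-modulo operator `M_λ(t) = t − 2λ·⌊(t + λ)/(2λ)⌋`. -/
noncomputable def Mlam (lam t : ℝ) : ℝ := t - 2 * lam * ⌊(t + lam) / (2 * lam)⌋

/-- The Radon projection `R_θ f(t) = ∫ f(t·cos θ − s·sin θ, t·sin θ + s·cos θ) ds`. -/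
noncomputable def radonProj (f : ℝ × ℝ → ℝ) (θ t : ℝ) : ℝ :=
  ∫ s : ℝ, f (t * Real.cos θ - s * Real.sin θ, t * Real.sin θ + s * Real.cos θ)

/-!
The difference `h = f - g` has Radon projections that are continuous, compactly supported and
take values in `2λℤ`; by connectedness of `ℝ` they vanish. The Fourier slice theorem then makes the
Fourier transform of `h` vanish on every line through the origin, and Fourier inversion gives
`h = 0`. We identify `ℝ²` with the real inner product space `ℂ`, where rotations become
multiplication by unit complex numbers.
-/

open FourierTransform

theorem Mlam_eq_toIcoMod {lam : ℝ} (hlam : 0 < lam) (t : ℝ) :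
    Mlam lam t = toIcoMod (by positivity : 0 < 2 * lam) (-lam) t := by
  rw [toIcoMod, toIcoDiv_eq_floor, Mlam, sub_neg_eq_add, zsmul_eq_mul]
  ring

theorem sub_mem_zmultiples_of_Mlam_eq {lam x y : ℝ} (hlam : 0 < lam)
    (h : Mlam lam x = Mlam lam y) : x - y ∈ AddSubgroup.zmultiples (2 * lam) := by
  rw [Mlam_eq_toIcoMod hlam, Mlam_eq_toIcoMod hlam, toIcoMod_eq_toIcoMod] at h
  obtain ⟨n, hn⟩ := h
  exact ⟨-n, by simp only [neg_zsmul, ← hn, neg_sub]⟩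

theorem eq_zero_of_hasCompactSupport_of_mem_zmultiples {X : Type*} [TopologicalSpace X]
    [PreconnectedSpace X] [NoncompactSpace X] {u : X → ℝ} (hu : Continuous u)
    (hus : HasCompactSupport u) {p : ℝ} (hp : ∀ x, u x ∈ AddSubgroup.zmultiples p) : u = 0 := by
  obtain ⟨x₀, hx₀⟩ := (Set.ne_univ_iff_exists_notMem _).1 hus.isCompact.ne_univ
  have hconst : ∀ x, u x = u x₀ := fun x => congrArg Subtype.val
    (PreconnectedSpace.constant inferInstance (hu.subtype_mk hp) (x := x) (y := x₀))
  funext x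
  rw [hconst, image_eq_zero_of_notMem_tsupport hx₀, Pi.zero_apply]

theorem eq_zero_of_fourier_eq_zero {V E : Type*} [NormedAddCommGroup V] [InnerProductSpace ℝ V]
    [MeasurableSpace V] [BorelSpace V] [FiniteDimensional ℝ V] [NormedAddCommGroup E]
    [NormedSpace ℂ E] [CompleteSpace E] {f : V → E} (hf : Continuous f) (hfi : Integrable f)
    (h : 𝓕 f = 0) : f = 0 := by
  rw [← hf.fourierInv_fourier_eq hfi (h ▸ integrable_zero _ _ _), h]
  ext
  simp [Real.fourierInv_eq]

theorem HasCompactSupport.of_uncurry {X Y M : Type*} [TopologicalSpace X] [TopologicalSpace Y]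
    [T2Space Y] [Zero M] {f : X → Y → M} (hf : HasCompactSupport f.uncurry) (x : X) :
    HasCompactSupport (f x) :=
  HasCompactSupport.intro (hf.image continuous_snd) fun y hy =>
    image_eq_zero_of_notMem_tsupport (f := f.uncurry) (x := (x, y)) fun h => hy ⟨(x, y), h, rfl⟩

section ParametricIntegral

variable {X Y E : Type*} [TopologicalSpace X] [TopologicalSpace Y] [MeasurableSpace Y]
  [NormedAddCommGroup E] [NormedSpace ℝ E] {μ : Measure Y} {f : X → Y → E}

theorem HasCompactSupport.integral_right [T2Space X] (hf : HasCompactSupport f.uncurry) :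
    HasCompactSupport fun x => ∫ y, f x y ∂μ := by
  refine HasCompactSupport.intro (hf.image continuous_fst) fun x hx => ?_
  have : ∀ y, f x y = 0 := fun y =>
    image_eq_zero_of_notMem_tsupport (f := f.uncurry) (x := (x, y)) fun h => hx ⟨(x, y), h, rfl⟩
  simp [this]

theorem continuous_integral_of_hasCompactSupport [OpensMeasurableSpace Y]
    [FirstCountableTopology X] [LocallyCompactSpace X] [SecondCountableTopologyEither Y E]
    [IsLocallyFiniteMeasure μ] (hf : Continuous f.uncurry) (hfs : HasCompactSupport f.uncurry) :
    Continuous fun x => ∫ y, f x y ∂μ := by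
  have hV : ∀ x, ∫ y in Prod.snd '' tsupport f.uncurry, f x y ∂μ = ∫ y, f x y ∂μ := fun x =>
    setIntegral_eq_integral_of_forall_compl_eq_zero fun y hy =>
      image_eq_zero_of_notMem_tsupport (f := f.uncurry) (x := (x, y)) fun h => hy ⟨(x, y), h, rfl⟩
  simpa only [hV] using
    continuous_parametric_integral_of_continuous (μ := μ) hf (hfs.image continuous_snd)

end ParametricIntegral

open Complex (I equivRealProdCLM)

section Radon

variable {E : Type*} [NormedAddCommGroup E] {F : ℂ → E}

theorem HasCompactSupport.radon_integrand (hF : HasCompactSupport F) (u : Circle) :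
    HasCompactSupport (Function.uncurry fun t s : ℝ => F (u * (t + s * I))) := by
  convert hF.comp_homeomorph (equivRealProdCLM.symm.toHomeomorph.trans (rotation u).toHomeomorph)
  ext ⟨t, s⟩
  simp [Complex.equivRealProdCLM_symm_apply]

theorem integrable_radon_integrand (hF : Continuous F) (hFs : HasCompactSupport F) (u : Circle)
    (t : ℝ) : Integrable fun s : ℝ => F (u * (t + s * I)) :=
  (hF.comp (by fun_prop)).integrable_of_hasCompactSupport ((hFs.radon_integrand u).of_uncurry t)

variable [NormedSpace ℝ E]

/-- The Radon projection in complex coordinates, where the rotation by `θ` becomes multiplication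
by `u = exp (θ I)`. -/
noncomputable def radon (F : ℂ → E) (u : Circle) (t : ℝ) : E := ∫ s : ℝ, F (u * (t + s * I))

theorem continuous_radon (hF : Continuous F) (hFs : HasCompactSupport F) (u : Circle) :
    Continuous (radon F u) :=
  continuous_integral_of_hasCompactSupport (by fun_prop) (hFs.radon_integrand u)

theorem hasCompactSupport_radon (hFs : HasCompactSupport F) (u : Circle) :
    HasCompactSupport (radon F u) :=
  (hFs.radon_integrand u).integral_right

theorem radon_sub {G : ℂ → E} (hF : Continuous F) (hFs : HasCompactSupport F) (hG : Continuous G)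
    (hGs : HasCompactSupport G) (u : Circle) : radon (F - G) u = radon F u - radon G u := by
  ext t
  exact integral_sub (integrable_radon_integrand hF hFs u t) (integrable_radon_integrand hG hGs u t)

theorem radon_ofReal (F : ℂ → ℝ) (u : Circle) (t : ℝ) :
    radon (fun z => (F z : ℂ)) u t = radon F u t :=
  integral_ofReal

end Radon

theorem fourier_radon {E : Type*} [NormedAddCommGroup E] [NormedSpace ℂ E] [CompleteSpace E]
    {F : ℂ → E} (hF : Integrable F) (u : Circle) (r : ℝ) :
    𝓕 (radon F u) r = 𝓕 F (u * r) := by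
  have hG : Integrable (F ∘ rotation u) :=
    ((rotation u).measurePreserving.integrable_comp_emb
      (rotation u).toHomeomorph.measurableEmbedding).2 hF
  rw [← rotation_apply, ← Real.fourier_comp_linearIsometry, Real.fourier_real_eq, Real.fourier_eq,
    ← (Complex.volume_preserving_equiv_real_prod.symm).integral_comp
      Complex.measurableEquivRealProd.symm.measurableEmbedding, Measure.volume_eq_prod,
    integral_prod]
  · congr 1 with t
    simp only [radon, Circle.smul_def, ← integral_smul]
    congr 1 with s
    simp [Complex.inner, Complex.mk_eq_add_mul_I, mul_comm]
  · rw [← Measure.volume_eq_prod]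
    exact (Complex.volume_preserving_equiv_real_prod.symm.integrable_comp_emb
      Complex.measurableEquivRealProd.symm.measurableEmbedding).2
      ((Real.fourierIntegral_convergent_iff _).2 hG)

theorem eq_zero_of_radon_eq_zero {E : Type*} [NormedAddCommGroup E] [NormedSpace ℂ E]
    [CompleteSpace E] {F : ℂ → E} (hF : Continuous F) (hFi : Integrable F)
    (h : ∀ u, radon F u = 0) : F = 0 := by
  refine eq_zero_of_fourier_eq_zero hF hFi (funext fun ξ => ?_)
  obtain ⟨u, r, rfl⟩ : ∃ (u : Circle) (r : ℝ), ξ = u * r :=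
    ⟨Circle.exp ξ.arg, ‖ξ‖, by rw [Circle.coe_exp, mul_comm, Complex.norm_mul_exp_arg_mul_I]⟩
  simp [← fourier_radon hFi, h, Real.fourier_real_eq]

theorem Circle.exists_mem_Ico_exp_eq (u : Circle) : ∃ θ ∈ Set.Ico 0 (2 * π), Circle.exp θ = u := by
  obtain ⟨x, rfl⟩ := Circle.exp_surjective u
  obtain ⟨θ, hθ, hx⟩ := Circle.periodic_exp.exists_mem_Ico two_pi_pos x 0
  exact ⟨θ, by simpa using hθ, hx.symm⟩

theorem radonProj_eq_radon (f : ℝ × ℝ → ℝ) (θ t : ℝ) :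
    radonProj f θ t = radon (f ∘ Complex.equivRealProd) (Circle.exp θ) t := by
  simp only [radonProj, radon, Function.comp_apply]
  congr 1 with s
  congr 1
  ext <;> simp [Circle.coe_exp, Complex.exp_mul_I, ← Complex.ofReal_cos, ← Complex.ofReal_sin] <;>
    ring

theorem stmt7 (lam : ℝ) (hlam : 0 < lam) (f g : ℝ × ℝ → ℝ)
    (hf : Continuous f) (hg : Continuous g)
    (hfs : HasCompactSupport f) (hgs : HasCompactSupport g)
    (heq : ∀ θ ∈ Set.Ico (0 : ℝ) (2 * π), ∀ t : ℝ,
      Mlam lam (radonProj f θ t) = Mlam lam (radonProj g θ t)) :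
    f = g := by
  have hfc : Continuous (f ∘ Complex.equivRealProd) := hf.comp equivRealProdCLM.continuous
  have hgc : Continuous (g ∘ Complex.equivRealProd) := hg.comp equivRealProdCLM.continuous
  have hfcs : HasCompactSupport (f ∘ Complex.equivRealProd) :=
    hfs.comp_homeomorph equivRealProdCLM.toHomeomorph
  have hgcs : HasCompactSupport (g ∘ Complex.equivRealProd) :=
    hgs.comp_homeomorph equivRealProdCLM.toHomeomorph
  set F := f ∘ Complex.equivRealProd - g ∘ Complex.equivRealProd
  have hFc : Continuous F := hfc.sub hgc
  have hFs : HasCompactSupport F := hfcs.sub hgcs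
  have hradon : ∀ u, radon F u = 0 := by
    intro u
    obtain ⟨θ, hθ, rfl⟩ := u.exists_mem_Ico_exp_eq
    refine eq_zero_of_hasCompactSupport_of_mem_zmultiples (continuous_radon hFc hFs _)
      (hasCompactSupport_radon hFs _) (p := 2 * lam) fun t => ?_
    rw [radon_sub hfc hfcs hgc hgcs, Pi.sub_apply, ← radonProj_eq_radon, ← radonProj_eq_radon]
    exact sub_mem_zmultiples_of_Mlam_eq hlam (heq θ hθ t)
  have hF : (fun z => (F z : ℂ)) = 0 := by
    refine eq_zero_of_radon_eq_zero (by fun_prop) (hFc.integrable_of_hasCompactSupport hFs).ofReal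
      fun u => funext fun t => ?_
    simp [radon_ofReal, hradon]
  funext p
  simpa [F, sub_eq_zero] using congrFun hF (Complex.equivRealProd.symm p)
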